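/- Let k, ℓ ≥ 1 and ε_3 > 0 with C(k,2)·ε_3/3 + C(k,3)·8·ε_3 < 1. Suppose for each pair 1 ≤ i < j ≤ k we are given ℓ_{ij} bipartite graphs with ℓ/2 ≤ ℓ_{ij} ≤ ℓ, of which at most ε_3·ℓ/6 are 'bad', and for each triple 1 ≤ h < i < j ≤ k, among the ℓ_{hi}·ℓ_{ij}·ℓ_{hj} triads formed by choosing one graph per pair, at most ε_3·ℓ³ are 'irregular'. Then there exists a choice of one bipartite graph P_{ij} per pair such that no chosen P_{ij} is bad and no triad (P_{hi}, P_{ij}, P_{hj}) is irregular. -/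

import Mathlib

/-!
Choose one candidate per pair independently and uniformly, i.e. count selections in the product
of the candidate sets. Prescribing the graph of one pair, or a triad of graphs for the three pairs
of a triple, leaves the other coordinates free, so a bad pair occurs with probability at most
`(ε₃ℓ/6)/ℓᵢⱼ ≤ ε₃/3` and an irregular triad with probability at most
`ε₃ℓ³/(ℓₕᵢℓᵢⱼℓₕⱼ) ≤ 8ε₃`. Summed over the `C(k,2)` pairs and `C(k,3)` triples this is `< 1`.
-/

open Finset

theorem Fintype.card_filter_piFinset_mul_prod_le {ι α β : Type*} [Fintype ι] [DecidableEq ι]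
    [DecidableEq β] (F : ι → Finset α) (s : Finset ι) (g : (ι → α) → β)
    (hg : ∀ f f', g f = g f' → ∀ i ∈ s, f i = f' i) (T : Finset β) :
    #{f ∈ Fintype.piFinset F | g f ∈ T} * ∏ i ∈ s, #(F i) ≤ #T * #(Fintype.piFinset F) := by
  have hfiber : ∀ b ∈ T,
      #{f ∈ {f ∈ Fintype.piFinset F | g f ∈ T} | g f = b} ≤ ∏ i ∈ sᶜ, #(F i) := by
    intro b _
    rw [← prod_coe_sort, ← Fintype.card_piFinset]
    refine card_le_card_of_injOn (fun f (i : ↥sᶜ) => f i) (fun f hf => ?_)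
      (fun f hf f' hf' hff' => ?_)
    · simp only [mem_coe, mem_filter, Fintype.mem_piFinset] at hf ⊢
      exact fun i => hf.1.1 i
    · simp only [mem_coe, mem_filter] at hf hf'
      funext i
      by_cases hi : i ∈ s
      · exact hg f f' (hf.2.trans hf'.2.symm) i hi
      · exact congrFun hff' ⟨i, mem_compl.2 hi⟩
  calc #{f ∈ Fintype.piFinset F | g f ∈ T} * ∏ i ∈ s, #(F i)
      ≤ (∏ i ∈ sᶜ, #(F i)) * #T * ∏ i ∈ s, #(F i) := by
        gcongr
        exact card_le_mul_card_image_of_maps_to (fun f hf => (mem_filter.1 hf).2) _ hfiber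
    _ = #T * #(Fintype.piFinset F) := by
        rw [Fintype.card_piFinset, ← prod_mul_prod_compl s]; ring

theorem Fintype.card_filter_piFinset_le_mul_card {ι α β : Type*} [Fintype ι] [DecidableEq ι]
    [DecidableEq β] {F : ι → Finset α} {s : Finset ι} (hF : ∀ i ∈ s, (F i).Nonempty)
    (g : (ι → α) → β) (hg : ∀ f f', g f = g f' → ∀ i ∈ s, f i = f' i) {T : Finset β} {c : ℝ}
    (hT : (#T : ℝ) ≤ c * ∏ i ∈ s, (#(F i) : ℝ)) :
    (#{f ∈ Fintype.piFinset F | g f ∈ T} : ℝ) ≤ c * #(Fintype.piFinset F) := by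
  have hM : 0 < ∏ i ∈ s, (#(F i) : ℝ) :=
    prod_pos fun i hi => by exact_mod_cast (hF i hi).card_pos
  refine le_of_mul_le_mul_right ?_ hM
  calc (#{f ∈ Fintype.piFinset F | g f ∈ T} : ℝ) * ∏ i ∈ s, (#(F i) : ℝ)
      ≤ #T * #(Fintype.piFinset F) := by
        exact_mod_cast Fintype.card_filter_piFinset_mul_prod_le F s g hg T
    _ ≤ c * (∏ i ∈ s, (#(F i) : ℝ)) * #(Fintype.piFinset F) := by gcongr
    _ = c * #(Fintype.piFinset F) * ∏ i ∈ s, (#(F i) : ℝ) := by ring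

theorem Finset.exists_mem_forall_notMem_of_sum_lt_one {α ι : Type*} [DecidableEq α] {Ω : Finset α}
    (hΩ : Ω.Nonempty) (I : Finset ι) (E : ι → Finset α) (p : ι → ℝ)
    (hE : ∀ i ∈ I, (#(E i) : ℝ) ≤ p i * #Ω) (hp : ∑ i ∈ I, p i < 1) :
    ∃ x ∈ Ω, ∀ i ∈ I, x ∉ E i := by
  suffices #(I.biUnion E) < #Ω by
    obtain ⟨x, hxΩ, hx⟩ := exists_mem_notMem_of_card_lt_card this
    exact ⟨x, hxΩ, fun i hi hxi => hx (mem_biUnion.2 ⟨i, hi, hxi⟩)⟩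
  have hΩpos : (0 : ℝ) < #Ω := by exact_mod_cast hΩ.card_pos
  have : (#(I.biUnion E) : ℝ) < #Ω := calc
    (#(I.biUnion E) : ℝ) ≤ ∑ i ∈ I, (#(E i) : ℝ) := by exact_mod_cast card_biUnion_le
    _ ≤ ∑ i ∈ I, p i * #Ω := sum_le_sum hE
    _ = (∑ i ∈ I, p i) * #Ω := by rw [sum_mul]
    _ < 1 * #Ω := by gcongr
    _ = #Ω := one_mul _
  exact_mod_cast this

theorem Fintype.card_filter_lt_lt_le_choose_three {α : Type*} [Fintype α] [LinearOrder α] :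
    #{t : α × α × α | t.1 < t.2.1 ∧ t.2.1 < t.2.2} ≤ (Fintype.card α).choose 3 := by
  rw [← card_univ, ← card_powersetCard]
  refine card_le_card_of_injOn (fun t => {t.1, t.2.1, t.2.2}) ?_ ?_
  · rintro ⟨a, b, c⟩ ht
    simp only [mem_coe, mem_filter, mem_univ, true_and] at ht
    simp only [mem_coe, mem_powersetCard, subset_univ, true_and]
    exact card_eq_three.2 ⟨a, b, c, ht.1.ne, (ht.1.trans ht.2).ne, ht.2.ne, rfl⟩
  · rintro ⟨a, b, c⟩ ht ⟨a', b', c'⟩ ht' h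
    simp only [mem_coe, mem_filter, mem_univ, true_and] at ht ht'
    simp only [Finset.ext_iff, mem_insert, mem_singleton] at h
    have := h a; have := h b; have := h c; have := h a'; have := h b'; have := h c'
    grind

section Selection

variable {k : ℕ} (L : Fin k → Fin k → ℕ)

/-- Off the pairs `i < j` the coordinate is a dummy with the single value `0`, so that a selection
of one graph per pair is a plain function on `Fin k × Fin k`. -/
def candidates (p : Fin k × Fin k) : Finset ℕ :=
  if p.1 < p.2 then range (L p.1 p.2) else {0}

lemma card_candidates_of_lt {i j : Fin k} (hij : i < j) : #(candidates L (i, j)) = L i j := by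
  simp [candidates, hij]

lemma candidates_nonempty (hL : ∀ i j : Fin k, i < j → 0 < L i j) (p : Fin k × Fin k) :
    (candidates L p).Nonempty := by
  unfold candidates
  split_ifs with hp
  · exact nonempty_range_iff.2 (hL p.1 p.2 hp).ne'
  · exact singleton_nonempty 0

lemma card_selections_bad_le (hL : ∀ i j : Fin k, i < j → 0 < L i j) {ℓ : ℕ} {ε : ℝ}
    (hε : 0 ≤ ε) {i j : Fin k} (hij : i < j) (hℓ : (ℓ : ℝ) / 2 ≤ L i j) {B : Finset ℕ}
    (hB : (#B : ℝ) ≤ ε * ℓ / 6) :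
    (#{f ∈ Fintype.piFinset (candidates L) | f (i, j) ∈ B} : ℝ)
      ≤ ε / 3 * #(Fintype.piFinset (candidates L)) := by
  refine Fintype.card_filter_piFinset_le_mul_card (s := {(i, j)})
    (fun p _ => candidates_nonempty L hL p) (fun f => f (i, j)) (by simp) ?_
  rw [prod_singleton, card_candidates_of_lt L hij]
  calc (#B : ℝ) ≤ ε / 3 * (ℓ / 2) := by linarith
    _ ≤ ε / 3 * L i j := by gcongr

lemma card_selections_irregular_le (hL : ∀ i j : Fin k, i < j → 0 < L i j) {ℓ : ℕ} {ε : ℝ}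
    (hε : 0 ≤ ε) {h i j : Fin k} (hhi : h < i) (hij : i < j) (hℓhi : (ℓ : ℝ) / 2 ≤ L h i)
    (hℓij : (ℓ : ℝ) / 2 ≤ L i j) (hℓhj : (ℓ : ℝ) / 2 ≤ L h j) {T : Finset (ℕ × ℕ × ℕ)}
    (hT : (#T : ℝ) ≤ ε * ℓ ^ 3) :
    (#{f ∈ Fintype.piFinset (candidates L) | (f (h, i), f (i, j), f (h, j)) ∈ T} : ℝ)
      ≤ 8 * ε * #(Fintype.piFinset (candidates L)) := by
  refine Fintype.card_filter_piFinset_le_mul_card (s := {(h, i), (i, j), (h, j)})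
    (fun p _ => candidates_nonempty L hL p) (fun f => (f (h, i), f (i, j), f (h, j)))
    (by simp +contextual) ?_
  rw [prod_insert (by simp [hij.ne]), prod_insert (by simp [hhi.ne']), prod_singleton,
    card_candidates_of_lt L hhi, card_candidates_of_lt L hij,
    card_candidates_of_lt L (hhi.trans hij)]
  calc (#T : ℝ) ≤ 8 * ε * (ℓ / 2 * (ℓ / 2 * (ℓ / 2))) := by linarith
    _ ≤ 8 * ε * (L h i * (L i j * L h j)) := by gcongr

end Selection

def increasingPairs (k : ℕ) : Finset (Fin k × Fin k) := {p | p.1 < p.2}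

def increasingTriples (k : ℕ) : Finset (Fin k × Fin k × Fin k) :=
  {t | t.1 < t.2.1 ∧ t.2.1 < t.2.2}

lemma sum_failure_probabilities_lt_one {k : ℕ} {ε : ℝ} (hε : 0 ≤ ε)
    (h : (k.choose 2 : ℝ) * ε / 3 + (k.choose 3 : ℝ) * 8 * ε < 1) :
    ∑ x ∈ (increasingPairs k).disjSum (increasingTriples k),
      Sum.elim (fun _ => ε / 3) (fun _ => 8 * ε) x < 1 := by
  have hpairs : #(increasingPairs k) = k.choose 2 := by
    simpa [increasingPairs] using Fintype.card_product_filter_lt (α := Fin k)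
  have htriads : #(increasingTriples k) ≤ k.choose 3 := by
    simpa [increasingTriples] using Fintype.card_filter_lt_lt_le_choose_three (α := Fin k)
  rw [sum_disjSum]
  simp only [Sum.elim_inl, Sum.elim_inr, sum_const, nsmul_eq_mul, hpairs]
  calc _ ≤ (k.choose 2 : ℝ) * (ε / 3) + (k.choose 3 : ℝ) * (8 * ε) := by gcongr
    _ < 1 := by linarith

theorem stmt_12_general (k ℓ : ℕ) (hℓ : 1 ≤ ℓ) (ε3 : ℝ) (hε3 : 0 ≤ ε3)
    (hsum : (k.choose 2 : ℝ) * ε3 / 3 + (k.choose 3 : ℝ) * 8 * ε3 < 1)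
    (L : Fin k → Fin k → ℕ)
    (hL : ∀ i j : Fin k, i < j → (ℓ : ℝ) / 2 ≤ (L i j : ℝ) ∧ L i j ≤ ℓ)
    (Bad : Fin k → Fin k → Finset ℕ)
    (hBad : ∀ i j : Fin k, i < j → ((Bad i j).card : ℝ) ≤ ε3 * ℓ / 6)
    (Irr : Fin k → Fin k → Fin k → Finset (ℕ × ℕ × ℕ))
    (hIrr : ∀ h i j : Fin k, h < i → i < j → ((Irr h i j).card : ℝ) ≤ ε3 * (ℓ : ℝ) ^ 3) :
    ∃ a : Fin k → Fin k → ℕ,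
      (∀ i j : Fin k, i < j → a i j < L i j ∧ a i j ∉ Bad i j) ∧
      (∀ h i j : Fin k, h < i → i < j → (a h i, a i j, a h j) ∉ Irr h i j) := by
  have hLpos : ∀ i j : Fin k, i < j → 0 < L i j := fun i j hij => by
    have : (1 : ℝ) ≤ ℓ := by exact_mod_cast hℓ
    exact_mod_cast (show (0 : ℝ) < L i j by linarith [(hL i j hij).1])
  set Ω := Fintype.piFinset (candidates L)
  obtain ⟨f, hfΩ, hf⟩ := exists_mem_forall_notMem_of_sum_lt_one
    (Fintype.piFinset_nonempty.2 (candidates_nonempty L hLpos))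
    ((increasingPairs k).disjSum (increasingTriples k))
    (Sum.elim (fun p => {f ∈ Ω | f p ∈ Bad p.1 p.2})
      (fun t => {f ∈ Ω |
        (f (t.1, t.2.1), f (t.2.1, t.2.2), f (t.1, t.2.2)) ∈ Irr t.1 t.2.1 t.2.2}))
    (Sum.elim (fun _ => ε3 / 3) (fun _ => 8 * ε3))
    (by
      rintro (⟨i, j⟩ | ⟨h, i, j⟩) hx <;>
        simp only [inl_mem_disjSum, inr_mem_disjSum, increasingPairs, increasingTriples,
          mem_filter, mem_univ, true_and] at hx
      · exact card_selections_bad_le L hLpos hε3 hx (hL i j hx).1 (hBad i j hx)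
      · exact card_selections_irregular_le L hLpos hε3 hx.1 hx.2 (hL h i hx.1).1 (hL i j hx.2).1
          (hL h j (hx.1.trans hx.2)).1 (hIrr h i j hx.1 hx.2))
    (sum_failure_probabilities_lt_one hε3 hsum)
  refine ⟨fun i j => f (i, j), fun i j hij => ⟨?_, fun hbad => ?_⟩, fun h i j hhi hij hirr => ?_⟩
  · simpa [candidates, hij] using Fintype.mem_piFinset.1 hfΩ (i, j)
  · exact hf (.inl (i, j)) (by simpa [increasingPairs] using hij) (mem_filter.2 ⟨hfΩ, hbad⟩)
  · exact hf (.inr (h, i, j)) (by simpa [increasingTriples] using ⟨hhi, hij⟩)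
      (mem_filter.2 ⟨hfΩ, hirr⟩)

/-- the probabilistic selection step.  Given for each pair i < j a family
of ℓ_{ij} candidate bipartite graphs (indexed by ℕ, with ℓ/2 ≤ ℓ_{ij} ≤ ℓ), of which at
most ε₃ℓ/6 are bad, and for each triple h < i < j at most ε₃ℓ³ irregular triads, with
C(k,2)ε₃/3 + C(k,3)·8ε₃ < 1, one can choose one candidate per pair so that no chosen
graph is bad and no chosen triad is irregular. -/
theorem stmt_12 (k ℓ : ℕ) (hk : 1 ≤ k) (hℓ : 1 ≤ ℓ) (ε3 : ℝ) (hε3 : 0 ≤ ε3)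
    (hsum : (k.choose 2 : ℝ) * ε3 / 3 + (k.choose 3 : ℝ) * 8 * ε3 < 1)
    (L : Fin k → Fin k → ℕ)
    (hL : ∀ i j : Fin k, i < j → (ℓ : ℝ) / 2 ≤ (L i j : ℝ) ∧ L i j ≤ ℓ)
    (Bad : Fin k → Fin k → Finset ℕ)
    (hBadsub : ∀ i j : Fin k, i < j → Bad i j ⊆ Finset.range (L i j))
    (hBad : ∀ i j : Fin k, i < j → ((Bad i j).card : ℝ) ≤ ε3 * ℓ / 6)
    (Irr : Fin k → Fin k → Fin k → Finset (ℕ × ℕ × ℕ))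
    (hIrr : ∀ h i j : Fin k, h < i → i < j → ((Irr h i j).card : ℝ) ≤ ε3 * (ℓ : ℝ) ^ 3) :
    ∃ a : Fin k → Fin k → ℕ,
      (∀ i j : Fin k, i < j → a i j < L i j ∧ a i j ∉ Bad i j) ∧
      (∀ h i j : Fin k, h < i → i < j → (a h i, a i j, a h j) ∉ Irr h i j) :=
  stmt_12_general k ℓ hℓ ε3 hε3 hsum L hL Bad hBad Irr hIrr
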